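/- For every C ∈ ℤ[i]⁵ there exists exactly one vector r ∈ ℤ[i]⁵ such that all entries of r are real (imaginary part zero), the first entry r₀ equals 0 or 3, each of the remaining four entries equals 0, 1, or 2, and C − r lies in the ℤ[i]-span of the columns of K̄. In other words, these 162 configurations form a complete set of representatives for the firing equivalence classes of chip configurations on R₁₀. -/

import Mathlib

/-!
Over `ℤ[i]` the matrix `K̄` has invariant factors `1, 1, 1, 3, 3 - 3i`, so a configuration lies in
the range of `K̄` exactly when two linear forms vanish, one modulo `3` and one modulo `3 - 3i`; the
firing classes form a group of order `9 · 18 = 162`. In real and imaginary parts these two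
divisibilities are four congruences modulo `3` and one modulo `6`. For a real configuration with
`r 0 ∈ {0, 3}` the congruences modulo `3` are a triangular system in `r 1, …, r 4`, with exactly one
solution in `{0, 1, 2}`, and the remaining parity condition selects `r 0`.
-/

open Matrix

/-- The 5×5 integer matrix `D` with `D j k = 1` if `j = k`, `-1` if `j - k ≡ ±1 (mod 5)`,
and `0` otherwise. -/
def Dmat : Matrix (Fin 5) (Fin 5) ℤ := fun j k =>
  if j = k then 1
  else if (j : ZMod 5) - (k : ZMod 5) = 1 ∨ (j : ZMod 5) - (k : ZMod 5) = -1 then -1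
  else 0

/-- The Gaussian integer `i`. -/
def gi : GaussianInt := ⟨0, 1⟩

/-- `K̄ = I₅ + i • D`, a symmetric 5×5 matrix over the Gaussian integers:
`1 + i` on the diagonal, `-i` in positions with `j - k ≡ ±1 (mod 5)`, `0` elsewhere. -/
noncomputable def Kbar : Matrix (Fin 5) (Fin 5) GaussianInt :=
  1 + gi • (Dmat.map (Int.cast : ℤ → GaussianInt))

lemma GaussianInt.intCast_mul_one_sub_gi_mul (n : ℤ) (w : GaussianInt) :
    n * (1 - gi) * w = ⟨n * (w.re + w.im), n * (w.im - w.re)⟩ := by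
  ext <;>
    simp only [gi, Zsqrtd.re_mul, Zsqrtd.im_mul, Zsqrtd.re_sub, Zsqrtd.im_sub, Zsqrtd.re_one,
      Zsqrtd.im_one, Zsqrtd.re_intCast, Zsqrtd.im_intCast] <;>
    ring

theorem GaussianInt.intCast_mul_one_sub_gi_dvd_iff (n : ℤ) (z : GaussianInt) :
    n * (1 - gi) ∣ z ↔ n ∣ z.re ∧ n ∣ z.im ∧ 2 * n ∣ z.re + z.im := by
  constructor
  · rintro ⟨w, rfl⟩
    rw [intCast_mul_one_sub_gi_mul]
    exact ⟨dvd_mul_right _ _, dvd_mul_right _ _, ⟨w.im, by ring⟩⟩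
  · rintro ⟨⟨a, ha⟩, ⟨b, hb⟩, hab⟩
    rcases eq_or_ne n 0 with rfl | hn
    · simp_all [Zsqrtd.ext_iff]
    obtain ⟨k, hk⟩ : 2 ∣ a + b := by
      rw [ha, hb, ← mul_add, mul_comm 2] at hab
      exact (mul_dvd_mul_iff_left hn).1 hab
    refine ⟨⟨a - k, k⟩, ?_⟩
    rw [intCast_mul_one_sub_gi_mul]
    ext
    · linear_combination ha
    · linear_combination hb + n * hk

lemma Kbar_eq : Kbar =
    !![⟨1, 1⟩, ⟨0, -1⟩, 0, 0, ⟨0, -1⟩;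
       ⟨0, -1⟩, ⟨1, 1⟩, ⟨0, -1⟩, 0, 0;
       0, ⟨0, -1⟩, ⟨1, 1⟩, ⟨0, -1⟩, 0;
       0, 0, ⟨0, -1⟩, ⟨1, 1⟩, ⟨0, -1⟩;
       ⟨0, -1⟩, 0, 0, ⟨0, -1⟩, ⟨1, 1⟩] := by
  decide

/-- `cokerForm₁` and `cokerForm₂` are the last two rows of a left Smith transform of `Kbar`. -/
def cokerForm₁ : Fin 5 → GaussianInt := ![-4, ⟨-1, -2⟩, ⟨1, -1⟩, 1, 0]

def cokerForm₂ : Fin 5 → GaussianInt := ![⟨1, -2⟩, 1, gi, gi, 1]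

lemma cokerForm₁_vecMul_Kbar :
    cokerForm₁ ᵥ* Kbar = (3 : GaussianInt) • ![⟨-2, -1⟩, 0, 0, 0, gi] := by
  rw [Kbar_eq]
  decide

lemma cokerForm₂_vecMul_Kbar : cokerForm₂ ᵥ* Kbar = Pi.single 0 (3 * (1 - gi)) := by
  rw [Kbar_eq]
  decide

section Coordinates

variable (x : Fin 5 → GaussianInt)

lemma re_cokerForm₁_dotProduct :
    (cokerForm₁ ⬝ᵥ x).re =
      -4 * (x 0).re - (x 1).re + 2 * (x 1).im + (x 2).re + (x 2).im + (x 3).re := by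
  simp only [cokerForm₁, dotProduct, Fin.sum_univ_five, cons_val_zero, cons_val_one, cons_val,
    Zsqrtd.re_add, Zsqrtd.re_mul, Zsqrtd.re_neg, Zsqrtd.im_neg, Zsqrtd.re_ofNat, Zsqrtd.im_ofNat,
    Zsqrtd.re_one, Zsqrtd.im_one, Zsqrtd.re_zero, Zsqrtd.im_zero]
  ring

lemma im_cokerForm₁_dotProduct :
    (cokerForm₁ ⬝ᵥ x).im =
      -4 * (x 0).im - 2 * (x 1).re - (x 1).im - (x 2).re + (x 2).im + (x 3).im := by
  simp only [cokerForm₁, dotProduct, Fin.sum_univ_five, cons_val_zero, cons_val_one, cons_val,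
    Zsqrtd.im_add, Zsqrtd.im_mul, Zsqrtd.re_neg, Zsqrtd.im_neg, Zsqrtd.re_ofNat, Zsqrtd.im_ofNat,
    Zsqrtd.re_one, Zsqrtd.im_one, Zsqrtd.re_zero, Zsqrtd.im_zero]
  ring

lemma re_cokerForm₂_dotProduct :
    (cokerForm₂ ⬝ᵥ x).re =
      (x 0).re + 2 * (x 0).im + (x 1).re - (x 2).im - (x 3).im + (x 4).re := by
  simp only [cokerForm₂, gi, dotProduct, Fin.sum_univ_five, cons_val_zero, cons_val_one, cons_val,
    Zsqrtd.re_add, Zsqrtd.re_mul, Zsqrtd.re_one, Zsqrtd.im_one]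
  ring

lemma im_cokerForm₂_dotProduct :
    (cokerForm₂ ⬝ᵥ x).im =
      -2 * (x 0).re + (x 0).im + (x 1).im + (x 2).re + (x 3).re + (x 4).im := by
  simp only [cokerForm₂, gi, dotProduct, Fin.sum_univ_five, cons_val_zero, cons_val_one, cons_val,
    Zsqrtd.im_add, Zsqrtd.im_mul, Zsqrtd.re_one, Zsqrtd.im_one]
  ring

end Coordinates

/-- `Kbar * preimMat = 1 - e₃ cokerForm₁ᵀ - e₄ (cokerForm₂ - i cokerForm₁)ᵀ`,
`Kbar *ᵥ preimVec₁ = 3 e₃ - 3i e₄` and `Kbar *ᵥ preimVec₂ = (3 - 3i) e₄`. -/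
def preimMat : Matrix (Fin 5) (Fin 5) GaussianInt :=
  !![0, 0, 0, 0, 0;
     gi, 0, 0, 0, 0;
     ⟨1, 1⟩, gi, 0, 0, 0;
     ⟨2, -1⟩, ⟨1, 1⟩, gi, 0, 0;
     0, 0, 0, 0, 0]

def preimVec₁ : Fin 5 → GaussianInt := ![0, gi, ⟨1, 1⟩, ⟨2, -1⟩, -gi]

def preimVec₂ : Fin 5 → GaussianInt := ![1, gi, gi, 1, ⟨1, -2⟩]

lemma Kbar_mulVec_preim (x : Fin 5 → GaussianInt) (t s : GaussianInt)
    (ht : cokerForm₁ ⬝ᵥ x = 3 * t) (hs : cokerForm₂ ⬝ᵥ x = 3 * (1 - gi) * s) :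
    Kbar *ᵥ (preimMat *ᵥ x + t • preimVec₁ + s • preimVec₂) = x := by
  rw [Zsqrtd.ext_iff, re_cokerForm₁_dotProduct, im_cokerForm₁_dotProduct] at ht
  rw [Zsqrtd.ext_iff, re_cokerForm₂_dotProduct, im_cokerForm₂_dotProduct] at hs
  simp only [gi, Zsqrtd.re_mul, Zsqrtd.im_mul, Zsqrtd.re_sub, Zsqrtd.im_sub, Zsqrtd.re_ofNat,
    Zsqrtd.im_ofNat, Zsqrtd.re_one, Zsqrtd.im_one] at ht hs
  rw [Kbar_eq]
  funext j
  fin_cases j <;>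
    simp only [preimMat, preimVec₁, preimVec₂, gi, mulVec, dotProduct, Fin.sum_univ_five, of_apply,
      cons_val_zero, cons_val_one, cons_val, cons_mulVec, smul_cons, smul_eq_mul, add_cons,
      head_cons, tail_cons, Pi.add_apply, Fin.reduceFinMk, Zsqrtd.ext_iff, Zsqrtd.re_add,
      Zsqrtd.im_add, Zsqrtd.re_mul, Zsqrtd.im_mul, Zsqrtd.re_neg, Zsqrtd.im_neg, Zsqrtd.re_zero,
      Zsqrtd.im_zero, Zsqrtd.re_one, Zsqrtd.im_one] <;>
    omega

lemma mem_range_Kbar_iff (x : Fin 5 → GaussianInt) :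
    x ∈ LinearMap.range Kbar.mulVecLin ↔
      3 ∣ cokerForm₁ ⬝ᵥ x ∧ 3 * (1 - gi) ∣ cokerForm₂ ⬝ᵥ x := by
  constructor
  · rintro ⟨y, rfl⟩
    simp only [mulVecLin_apply, dotProduct_mulVec, cokerForm₁_vecMul_Kbar, cokerForm₂_vecMul_Kbar,
      smul_dotProduct, single_dotProduct, smul_eq_mul]
    exact ⟨dvd_mul_right _ _, dvd_mul_right _ _⟩
  · rintro ⟨⟨t, ht⟩, ⟨s, hs⟩⟩
    exact ⟨_, Kbar_mulVec_preim x t s ht hs⟩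

lemma mem_range_Kbar_iff_dvd (x : Fin 5 → GaussianInt) :
    x ∈ LinearMap.range Kbar.mulVecLin ↔
      3 ∣ (cokerForm₁ ⬝ᵥ x).re ∧ 3 ∣ (cokerForm₁ ⬝ᵥ x).im ∧
      3 ∣ (cokerForm₂ ⬝ᵥ x).re ∧ 3 ∣ (cokerForm₂ ⬝ᵥ x).im ∧
      6 ∣ (cokerForm₂ ⬝ᵥ x).re + (cokerForm₂ ⬝ᵥ x).im := by
  have h₁ := Zsqrtd.intCast_dvd 3 (cokerForm₁ ⬝ᵥ x)
  have h₂ := GaussianInt.intCast_mul_one_sub_gi_dvd_iff 3 (cokerForm₂ ⬝ᵥ x)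
  push_cast at h₁ h₂
  rw [mem_range_Kbar_iff, h₁, h₂, and_assoc]

def IsReducedConfig (r : Fin 5 → GaussianInt) : Prop :=
  (∀ j, (r j).im = 0) ∧ ((r 0).re = 0 ∨ (r 0).re = 3) ∧
    ∀ j, j ≠ 0 → ((r j).re = 0 ∨ (r j).re = 1 ∨ (r j).re = 2)

lemma IsReducedConfig.eq_of_sub_mem {r r' : Fin 5 → GaussianInt} (hr : IsReducedConfig r)
    (hr' : IsReducedConfig r') (h : r - r' ∈ LinearMap.range Kbar.mulVecLin) : r = r' := by
  obtain ⟨him, h0, hj⟩ := hr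
  obtain ⟨him', h0', hj'⟩ := hr'
  have hb (j : Fin 5) (hj0 : j ≠ 0) :
      0 ≤ (r j).re ∧ (r j).re ≤ 2 ∧ 0 ≤ (r' j).re ∧ (r' j).re ≤ 2 := by
    rcases hj j hj0 with e | e | e <;> rcases hj' j hj0 with e' | e' | e' <;> omega
  have := hb 1 (by decide)
  have := hb 2 (by decide)
  have := hb 3 (by decide)
  have := hb 4 (by decide)
  rw [mem_range_Kbar_iff_dvd] at h
  simp only [re_cokerForm₁_dotProduct, im_cokerForm₁_dotProduct, re_cokerForm₂_dotProduct,
    im_cokerForm₂_dotProduct, Pi.sub_apply, Zsqrtd.re_sub, Zsqrtd.im_sub, him, him'] at h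
  obtain ⟨e₀, e₁, e₂, e₃, e₄⟩ : (r 0).re = (r' 0).re ∧ (r 1).re = (r' 1).re ∧
      (r 2).re = (r' 2).re ∧ (r 3).re = (r' 3).re ∧ (r 4).re = (r' 4).re := by
    omega
  funext j
  refine Zsqrtd.ext ?_ (by rw [him, him'])
  fin_cases j
  exacts [e₀, e₁, e₂, e₃, e₄]

/-- With `r 0 ∈ {0, 3}`, the congruences of `mem_range_Kbar_iff_dvd` for `C - r` read
`r 1 ≡ q - a`, `r 2 ≡ q - a - b`, `r 3 ≡ a + b`, `r 4 ≡ p - q + a` (mod 3) and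
`r 0 ≡ p + q - r 1 - r 2 - r 3 - r 4` (mod 2). -/
def reducedRep (C : Fin 5 → GaussianInt) : Fin 5 → GaussianInt :=
  let a := (cokerForm₁ ⬝ᵥ C).re
  let b := (cokerForm₁ ⬝ᵥ C).im
  let p := (cokerForm₂ ⬝ᵥ C).re
  let q := (cokerForm₂ ⬝ᵥ C).im
  let r₁ := (q - a) % 3
  let r₂ := (q - a - b) % 3
  let r₃ := (a + b) % 3
  let r₄ := (p - q + a) % 3
  ![((3 * ((p + q - r₁ - r₂ - r₃ - r₄) % 2) : ℤ) : GaussianInt), r₁, r₂, r₃, r₄]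

lemma isReducedConfig_reducedRep (C : Fin 5 → GaussianInt) : IsReducedConfig (reducedRep C) := by
  refine ⟨fun j => ?_, ?_, fun j hj => ?_⟩
  · fin_cases j <;> simp [reducedRep]
  · simp only [reducedRep, cons_val_zero, Zsqrtd.re_intCast]
    omega
  · fin_cases j
    · exact absurd rfl hj
    all_goals
      simp only [reducedRep, Fin.mk_one, Fin.reduceFinMk, cons_val_one, cons_val, Zsqrtd.re_intCast]
      omega

lemma sub_reducedRep_mem (C : Fin 5 → GaussianInt) :
    C - reducedRep C ∈ LinearMap.range Kbar.mulVecLin := by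
  rw [mem_range_Kbar_iff_dvd]
  simp only [dotProduct_sub, Zsqrtd.re_sub, Zsqrtd.im_sub,
    re_cokerForm₁_dotProduct (reducedRep C), im_cokerForm₁_dotProduct (reducedRep C),
    re_cokerForm₂_dotProduct (reducedRep C), im_cokerForm₂_dotProduct (reducedRep C)]
  simp only [reducedRep, cons_val_zero, cons_val_one, cons_val, Zsqrtd.re_intCast,
    Zsqrtd.im_intCast]
  omega

/-- every `C ∈ ℤ[i]⁵` is firing equivalent to exactly one configuration `r`
whose entries are all real, with `r 0 ∈ {0, 3}` and `r j ∈ {0, 1, 2}` for `j ≠ 0`. -/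
theorem stmt_9 (C : Fin 5 → GaussianInt) :
    ∃! r : Fin 5 → GaussianInt,
      (∀ j, (r j).im = 0) ∧
      ((r 0).re = 0 ∨ (r 0).re = 3) ∧
      (∀ j, j ≠ 0 → ((r j).re = 0 ∨ (r j).re = 1 ∨ (r j).re = 2)) ∧
      C - r ∈ LinearMap.range Kbar.mulVecLin := by
  obtain ⟨him, h0, hj⟩ := isReducedConfig_reducedRep C
  refine ⟨reducedRep C, ⟨him, h0, hj, sub_reducedRep_mem C⟩, ?_⟩
  rintro r ⟨him', h0', hj', hr⟩
  refine IsReducedConfig.eq_of_sub_mem ⟨him', h0', hj'⟩ ⟨him, h0, hj⟩ ?_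
  simpa using Submodule.sub_mem _ (sub_reducedRep_mem C) hr
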